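/- arXiv:1110.1085 — 2 statements merged into one kernel-verified Lean document; each statement's English description precedes it below -/
import Mathlib

section
/- Let σ⁽¹⁾ and σ⁽²⁾ be density matrices on ℂⁿ with supp[σ⁽¹⁾] ∩ supp[σ⁽²⁾] ≠ {0}. Then there exist a density matrix μ on ℂⁿ, density matrices η⁽¹⁾ and η⁽²⁾ on ℂⁿ, and real numbers p₁, p₂ with 0 < p₁ ≤ 1 and 0 < p₂ ≤ 1, such that σ⁽¹⁾ = p₁·μ + (1−p₁)·η⁽¹⁾ and σ⁽²⁾ = p₂·μ + (1−p₂)·η⁽²⁾. -/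
open scoped BigOperators ComplexOrder

open Matrix in
private lemma cs_dot {n : ℕ} (a b : Fin n → ℂ) :
    Complex.normSq (star a ⬝ᵥ b) ≤ (star a ⬝ᵥ a).re * (star b ⬝ᵥ b).re := by
  have h := inner_mul_inner_self_le (𝕜 := ℂ) (E := EuclideanSpace ℂ (Fin n))
    ((WithLp.equiv 2 _).symm a) ((WithLp.equiv 2 _).symm b)
  have e : ∀ x y : Fin n → ℂ, inner ℂ ((WithLp.equiv 2 _).symm x : EuclideanSpace ℂ (Fin n))
      ((WithLp.equiv 2 _).symm y) = star x ⬝ᵥ y := fun x y => by rw [dotProduct_comm]; rfl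
  rw [e, e, e, e] at h
  have hsym : star b ⬝ᵥ a = starRingEnd ℂ (star a ⬝ᵥ b) := by
    simp [dotProduct, Finset.mul_sum, map_sum, mul_comm]
  rw [hsym, RCLike.norm_conj] at h
  calc Complex.normSq (star a ⬝ᵥ b) = ‖star a ⬝ᵥ b‖ * ‖star a ⬝ᵥ b‖ := by
        rw [← Complex.sq_norm, sq]
    _ ≤ _ := h

open Matrix in
private lemma psd_smul_complex {n : ℕ} {M : Matrix (Fin n) (Fin n) ℂ} (hM : M.PosSemidef)
    {c : ℂ} (hc : 0 ≤ c) : (c • M).PosSemidef := by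
  have hcs : star c = c := by
    rw [Complex.star_def, Complex.conj_eq_iff_im]
    exact ((Complex.le_def.mp hc).2).symm
  refine PosSemidef.of_dotProduct_mulVec_nonneg ?_ (fun x => ?_)
  · unfold Matrix.IsHermitian
    rw [conjTranspose_smul, hM.1, hcs]
  · rw [smul_mulVec, dotProduct_smul, smul_eq_mul]
    exact mul_nonneg hc (hM.dotProduct_mulVec_nonneg x)

open Matrix in
private lemma real_smul_eq {n : ℕ} (r : ℝ) (M : Matrix (Fin n) (Fin n) ℂ) :
    r • M = ((r : ℂ)) • M := by
  ext i j
  simp [Complex.real_smul]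

open Matrix in
/-- Key lemma: if `v = σ x ≠ 0` for PSD `σ`, then `σ - c⁻¹ • v vᴴ` is PSD where
`c = re (xᴴ σ x)`. -/
private lemma key_lemma {n : ℕ} {σ : Matrix (Fin n) (Fin n) ℂ} (hσ : σ.PosSemidef)
    (x : Fin n → ℂ) (hx : σ.mulVec x ≠ 0) :
    ∃ c : ℝ, 0 < c ∧
      (σ - (((c⁻¹ : ℝ)) : ℂ) • vecMulVec (σ.mulVec x) (star (σ.mulVec x))).PosSemidef := by
  classical
  set v := σ.mulVec x with hv
  set c := (star x ⬝ᵥ σ.mulVec x).re with hc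
  have hform : 0 ≤ star x ⬝ᵥ σ.mulVec x := hσ.dotProduct_mulVec_nonneg x
  have hcpos : 0 < c := by
    rcases lt_or_eq_of_le (hσ.re_dotProduct_nonneg x) with h | h
    · exact h
    · exfalso
      apply hx
      rw [← hσ.dotProduct_mulVec_zero_iff x]
      have him : (star x ⬝ᵥ σ.mulVec x).im = 0 := ((Complex.le_def.mp hform).2).symm
      exact Complex.ext (by simpa using h.symm) him
  refine ⟨c, hcpos, PosSemidef.of_dotProduct_mulVec_nonneg ?_ (fun w => ?_)⟩
  · -- Hermitian
    have hvv : (vecMulVec v (star v)).IsHermitian := by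
      rw [vecMulVec_eq (Fin 1), ← conjTranspose_replicateCol]
      exact (posSemidef_self_mul_conjTranspose _).1
    unfold Matrix.IsHermitian
    rw [conjTranspose_sub, conjTranspose_smul, hσ.1, hvv]
    norm_num
  · -- quadratic form
    open scoped MatrixOrder Matrix.Norms.L2Operator in
    set A := CFC.sqrt σ with hA
    open scoped MatrixOrder Matrix.Norms.L2Operator in
    have hAH : A.IsHermitian := (CFC.sqrt_nonneg σ).posSemidef.1
    open scoped MatrixOrder Matrix.Norms.L2Operator in
    have hAA : A * A = σ := CFC.sqrt_mul_sqrt_self σ hσ.nonneg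
    have hdot : ∀ u w : Fin n → ℂ,
        star (A.mulVec u) ⬝ᵥ A.mulVec w = star u ⬝ᵥ σ.mulVec w := by
      intro u w
      rw [star_mulVec, ← dotProduct_mulVec, mulVec_mulVec, hAH.eq, hAA]
    have hvA : v = A.mulVec (A.mulVec x) := by rw [mulVec_mulVec, hAA]
    set z := star v ⬝ᵥ w with hz
    have hVw : (vecMulVec v (star v)).mulVec w = z • v := by
      ext i
      simp only [mulVec, vecMulVec_apply, dotProduct, hz, Pi.smul_apply, smul_eq_mul,
        Finset.sum_mul, Finset.mul_sum]
      apply Finset.sum_congr rfl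
      intro j _
      simp [Pi.star_apply]
      ring
    have hwv : star w ⬝ᵥ v = starRingEnd ℂ z := by
      simp [hz, dotProduct, map_sum, mul_comm]
    have hzcs : Complex.normSq z ≤ c * (star w ⬝ᵥ σ.mulVec w).re := by
      have h1 : z = star (A.mulVec x) ⬝ᵥ A.mulVec w := by
        rw [hz, hvA, star_mulVec, ← dotProduct_mulVec, hAH.eq]
      have h2 := cs_dot (A.mulVec x) (A.mulVec w)
      rw [← h1, hdot, hdot] at h2
      exact h2
    -- now compute the quadratic form
    rw [sub_mulVec, dotProduct_sub, smul_mulVec, dotProduct_smul, hVw,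
      dotProduct_smul, smul_eq_mul, smul_eq_mul, hwv]
    have hq : star w ⬝ᵥ σ.mulVec w = ((star w ⬝ᵥ σ.mulVec w).re : ℂ) := by
      refine Complex.ext rfl ?_
      simp [((Complex.le_def.mp (hσ.dotProduct_mulVec_nonneg w)).2).symm]
    rw [hq, Complex.mul_conj]
    have hcast : ((star w ⬝ᵥ σ.mulVec w).re : ℂ) - (((c⁻¹ : ℝ)) : ℂ) * (Complex.normSq z : ℂ)
        = (((star w ⬝ᵥ σ.mulVec w).re - c⁻¹ * Complex.normSq z : ℝ) : ℂ) := by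
      push_cast; ring
    rw [hcast]
    rw [Complex.zero_le_real]
    have hle : c⁻¹ * Complex.normSq z ≤ (star w ⬝ᵥ σ.mulVec w).re := by
      rw [inv_mul_le_iff₀ hcpos]
      exact hzcs
    linarith

open Matrix in
/-- Decomposition lemma: if `σ - t • μ` is PSD for some `t > 0` then `σ` is a mixture. -/
private lemma decomp_lemma {n : ℕ} {σ μ : Matrix (Fin n) (Fin n) ℂ}
    (hμ : μ.PosSemidef) (htσ : σ.trace = 1) (htμ : μ.trace = 1)
    {t : ℝ} (ht : 0 < t) (hsub : (σ - ((t : ℝ) : ℂ) • μ).PosSemidef) :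
    ∃ (η : Matrix (Fin n) (Fin n) ℂ) (p : ℝ), η.PosSemidef ∧ η.trace = 1 ∧
      0 < p ∧ p ≤ 1 ∧ σ = p • μ + (1 - p) • η := by
  set p := min t 2⁻¹ with hp
  have hp0 : 0 < p := lt_min ht (by norm_num)
  have hp1 : p ≤ 2⁻¹ := min_le_right _ _
  have hpt : p ≤ t := min_le_left _ _
  have h1p : (0:ℝ) < 1 - p := by linarith [hp1]
  have hσp : (σ - ((p : ℝ) : ℂ) • μ).PosSemidef := by
    have : σ - ((p : ℝ) : ℂ) • μ
        = (σ - ((t : ℝ) : ℂ) • μ) + (((t - p : ℝ)) : ℂ) • μ := by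
      push_cast
      module
    rw [this]
    exact hsub.add (psd_smul_complex hμ (by
      rw [Complex.zero_le_real]; linarith))
  refine ⟨((1 - p)⁻¹ : ℝ) • (σ - ((p : ℝ) : ℂ) • μ), p, ?_, ?_, hp0, by linarith, ?_⟩
  · rw [real_smul_eq]
    exact psd_smul_complex hσp (by rw [Complex.zero_le_real]; positivity)
  · rw [real_smul_eq, trace_smul, trace_sub, trace_smul, htσ, htμ, smul_eq_mul, smul_eq_mul]
    push_cast
    rw [mul_one, ← Complex.ofReal_one, ← Complex.ofReal_sub, ← Complex.ofReal_inv,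
      ← Complex.ofReal_mul, inv_mul_cancel₀ (ne_of_gt h1p)]
  · rw [real_smul_eq, real_smul_eq, real_smul_eq, smul_smul,
      ← Complex.ofReal_mul, mul_inv_cancel₀ (ne_of_gt h1p)]
    push_cast
    module

/-- Two density matrices on `ℂⁿ` whose supports have nontrivial
intersection admit a common decomposition: each is a convex mixture of a common density
matrix `μ` (with strictly positive weight) and some other density matrix. -/
theorem overlapping_support_common_decomposition_quantum
    {n : ℕ} (σ₁ σ₂ : Matrix (Fin n) (Fin n) ℂ)
    (hσ₁ : σ₁.PosSemidef) (htσ₁ : σ₁.trace = 1)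
    (hσ₂ : σ₂.PosSemidef) (htσ₂ : σ₂.trace = 1)
    (hsupp : LinearMap.range σ₁.mulVecLin ⊓ LinearMap.range σ₂.mulVecLin ≠ ⊥) :
    ∃ (μ η₁ η₂ : Matrix (Fin n) (Fin n) ℂ) (p₁ p₂ : ℝ),
      μ.PosSemidef ∧ μ.trace = 1 ∧
      η₁.PosSemidef ∧ η₁.trace = 1 ∧
      η₂.PosSemidef ∧ η₂.trace = 1 ∧
      0 < p₁ ∧ p₁ ≤ 1 ∧ 0 < p₂ ∧ p₂ ≤ 1 ∧
      σ₁ = p₁ • μ + (1 - p₁) • η₁ ∧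
      σ₂ = p₂ • μ + (1 - p₂) • η₂ := by
  classical
  open Matrix in
  -- get a common nonzero vector v in both ranges
  obtain ⟨v, hvmem, hvne⟩ := Submodule.exists_mem_ne_zero_of_ne_bot hsupp
  obtain ⟨x₁, hx₁⟩ := LinearMap.mem_range.mp hvmem.1
  obtain ⟨x₂, hx₂⟩ := LinearMap.mem_range.mp hvmem.2
  rw [Matrix.mulVecLin_apply] at hx₁ hx₂
  -- apply the key lemma to both
  obtain ⟨c₁, hc₁, hpsd₁⟩ := key_lemma hσ₁ x₁ (hx₁ ▸ hvne)
  obtain ⟨c₂, hc₂, hpsd₂⟩ := key_lemma hσ₂ x₂ (hx₂ ▸ hvne)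
  rw [hx₁] at hpsd₁
  rw [hx₂] at hpsd₂
  -- set up μ
  set V := Matrix.vecMulVec v (star v) with hV
  have hVpsd : V.PosSemidef := by
    rw [hV, Matrix.vecMulVec_eq (Fin 1), ← Matrix.conjTranspose_replicateCol]
    exact Matrix.posSemidef_self_mul_conjTranspose _
  have hVtrace : V.trace = ((∑ i, Complex.normSq (v i) : ℝ) : ℂ) := by
    rw [hV, Matrix.trace]
    push_cast
    apply Finset.sum_congr rfl
    intro i _
    simp [Matrix.vecMulVec_apply, Matrix.diag_apply, Complex.mul_conj]
  set tv : ℝ := ∑ i, Complex.normSq (v i) with htv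
  have htvpos : 0 < tv := by
    rcases Function.ne_iff.mp hvne with ⟨i, hi⟩
    have : 0 < Complex.normSq (v i) := by
      simpa [Complex.normSq_pos] using hi
    exact Finset.sum_pos' (fun j _ => Complex.normSq_nonneg _) ⟨i, Finset.mem_univ i, this⟩
  set μ : Matrix (Fin n) (Fin n) ℂ := ((tv⁻¹ : ℝ) : ℂ) • V with hμdef
  have hμpsd : μ.PosSemidef :=
    psd_smul_complex hVpsd (by rw [Complex.zero_le_real]; positivity)
  have hμtrace : μ.trace = 1 := by
    rw [hμdef, Matrix.trace_smul, hVtrace, smul_eq_mul, ← Complex.ofReal_mul,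
      inv_mul_cancel₀ (ne_of_gt htvpos), Complex.ofReal_one]
  -- σᵢ - (tv/cᵢ) • μ is PSD
  have hμmul : ∀ c : ℝ, 0 < c → (((c⁻¹ : ℝ)) : ℂ) • V = (((tv / c : ℝ)) : ℂ) • μ := by
    intro c hc
    rw [hμdef, smul_smul, ← Complex.ofReal_mul]
    congr 1
    push_cast [div_mul_eq_mul_div, mul_inv_cancel₀ (ne_of_gt htvpos)]
    field_simp
  have h₁ : (σ₁ - (((tv / c₁ : ℝ)) : ℂ) • μ).PosSemidef := by
    rw [← hμmul c₁ hc₁]; exact hpsd₁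
  have h₂ : (σ₂ - (((tv / c₂ : ℝ)) : ℂ) • μ).PosSemidef := by
    rw [← hμmul c₂ hc₂]; exact hpsd₂
  obtain ⟨η₁, p₁, hη₁, htη₁, hp₁0, hp₁1, heq₁⟩ :=
    decomp_lemma hμpsd htσ₁ hμtrace (div_pos htvpos hc₁) h₁
  obtain ⟨η₂, p₂, hη₂, htη₂, hp₂0, hp₂1, heq₂⟩ :=
    decomp_lemma hμpsd htσ₂ hμtrace (div_pos htvpos hc₂) h₂
  exact ⟨μ, η₁, η₂, p₁, p₂, hμpsd, hμtrace, hη₁, htη₁, hη₂, htη₂,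
    hp₁0, hp₁1, hp₂0, hp₂1, heq₁, heq₂⟩
end

section
/- Let X be a finite set and (ρ_x)_{x∈X} a hybrid state over X and ℂⁿ. Define the statistic t on {x : tr(ρ_x) > 0} by t(x) = ρ_{B|X=x} = ρ_x / tr(ρ_x), taking values in the (finite) set of density matrices of this form. Then: (a) t is a minimal sufficient statistic for X with respect to the quantum region B; and (b) for every x with tr(ρ_x) > 0, conditioning on the value of t reproduces that value: ρ_{B|t(X)=t(x)} = t(x), i.e., (Σ_{x′ : t(x′)=t(x)} ρ_{x′}) / (Σ_{x′ : t(x′)=t(x)} tr(ρ_{x′})) = ρ_x / tr(ρ_x). -/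
open scoped BigOperators ComplexOrder
open Classical

noncomputable section

/-- The conditional state `ρ_{B|X=x} = ρ_x / tr(ρ_x)` of a hybrid state. -/
def qcond {X : Type*} {n : ℕ} (ρ : X → Matrix (Fin n) (Fin n) ℂ) (x : X) :
    Matrix (Fin n) (Fin n) ℂ :=
  ((ρ x).trace)⁻¹ • ρ x

/-- The coarse-grained conditional state `ρ_{B|t(X)=a}` of a hybrid state. -/
def qcondOf {X : Type*} [Fintype X] {n : ℕ} (ρ : X → Matrix (Fin n) (Fin n) ℂ)
    {T : Type*} (t : X → T) (a : T) : Matrix (Fin n) (Fin n) ℂ :=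
  (∑ x, if t x = a then (ρ x).trace else 0)⁻¹ • (∑ x, if t x = a then ρ x else 0)

/-- `t` is a sufficient statistic for `X` with respect to the quantum region `B`:
`ρ_{B|t(X)=t(x)} = ρ_{B|X=x}` for every `x` with `tr(ρ_x) ≠ 0`. -/
def QSufficient {X : Type*} [Fintype X] {n : ℕ} (ρ : X → Matrix (Fin n) (Fin n) ℂ)
    {T : Type*} (t : X → T) : Prop :=
  ∀ x, (ρ x).trace ≠ 0 → qcondOf ρ t (t x) = qcond ρ x

lemma diag_nonneg' {n : ℕ} {M : Matrix (Fin n) (Fin n) ℂ} (h : M.PosSemidef) (i : Fin n) :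
    0 ≤ M i i := by
  exact h.diag_nonneg

lemma trace_nonneg' {n : ℕ} {M : Matrix (Fin n) (Fin n) ℂ} (h : M.PosSemidef) :
    0 ≤ M.trace :=
  Finset.sum_nonneg fun i _ => diag_nonneg' h i

lemma psd_trace_zero {n : ℕ} {M : Matrix (Fin n) (Fin n) ℂ} (h : M.PosSemidef)
    (ht : M.trace = 0) : M = 0 := by
  exact h.trace_eq_zero_iff.mp ht

lemma qcondOf_eq {X : Type*} [Fintype X] {n : ℕ} (ρ : X → Matrix (Fin n) (Fin n) ℂ)
    {T : Type*} (t : X → T) (a : T) (c : Matrix (Fin n) (Fin n) ℂ)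
    (hscale : ∀ x', t x' = a → ρ x' = (ρ x').trace • c)
    (hTne : (∑ x, if t x = a then (ρ x).trace else 0) ≠ 0) :
    qcondOf ρ t a = c := by
  have hsum : (∑ x, if t x = a then ρ x else 0)
      = (∑ x, if t x = a then (ρ x).trace else 0) • c := by
    rw [Finset.sum_smul]
    refine Finset.sum_congr rfl fun x' _ => ?_
    by_cases h : t x' = a
    · simp only [h, if_true]
      exact hscale x' h
    · simp [h]
  unfold qcondOf
  rw [hsum, smul_smul, inv_mul_cancel₀ hTne, one_smul]

lemma qcond_key {X : Type*} [Fintype X] {n : ℕ} (ρ : X → Matrix (Fin n) (Fin n) ℂ)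
    (hpsd : ∀ x, (ρ x).PosSemidef) (x : X) (hx : (ρ x).trace ≠ 0) :
    qcondOf ρ (fun x' => qcond ρ x') (qcond ρ x) = qcond ρ x := by
  set c := qcond ρ x with hc
  have hxpos : 0 < (ρ x).trace := lt_of_le_of_ne (trace_nonneg' (hpsd x)) (Ne.symm hx)
  refine qcondOf_eq ρ (fun x' => qcond ρ x') c c (fun x' h => ?_) ?_
  · by_cases h0 : (ρ x').trace = 0
    · have hz : ρ x' = 0 := psd_trace_zero (hpsd x') h0
      simp [hz, h0]
    · rw [← h]
      unfold qcond
      rw [smul_smul, mul_inv_cancel₀ h0, one_smul]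
  · refine ne_of_gt (Finset.sum_pos' (fun x' _ => ?_) ⟨x, Finset.mem_univ x, ?_⟩)
    · by_cases h : qcond ρ x' = c
      · simp only [h, if_true]
        exact trace_nonneg' (hpsd x')
      · simp [h]
    · simpa [hc] using hxpos

/-- The statistic `t(x) = ρ_{B|X=x} = ρ_x / tr(ρ_x)`, taking density
matrices as values, is (a) a minimal sufficient statistic for `X` with respect to the
quantum region `B`, and (b) conditioning on the value of `t` reproduces that value:
`ρ_{B|t(X)=t(x)} = t(x)` for every `x` with `tr(ρ_x) > 0`. -/
theorem quantum_conditional_is_minimal_sufficient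
    {X : Type*} [Fintype X] {n : ℕ}
    (ρ : X → Matrix (Fin n) (Fin n) ℂ)
    (hpsd : ∀ x, (ρ x).PosSemidef)
    (hnorm : ∑ x, (ρ x).trace = 1) :
    QSufficient ρ (fun x => qcond ρ x) ∧
    (∀ (S : Type) [Fintype S] (s : X → S), QSufficient ρ s →
      ∃ f : S → Matrix (Fin n) (Fin n) ℂ,
        ∀ x, 0 < (ρ x).trace → qcond ρ x = f (s x)) ∧
    (∀ x, 0 < (ρ x).trace →
      qcondOf ρ (fun x' => qcond ρ x') (qcond ρ x) = qcond ρ x) := by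
  refine ⟨fun x hx => qcond_key ρ hpsd x hx, ?_, fun x hx => qcond_key ρ hpsd x hx.ne'⟩
  intro S _ s hs
  exact ⟨fun a => qcondOf ρ s a, fun x hx => (hs x hx.ne').symm⟩

end
end
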